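/- Let p ≥ 1 and k ≥ 1 be integers with gcd(k,p) = 1. If cos(πk/p) is a rational number, then cos(π/p) is also a rational number. -/

import Mathlib

open Real Polynomial

/-
If `a k + b p = 1` (Bézout), then `π / p = a · (π k / p) + b π`. Since `cos (n θ) = T_n (cos θ)`
for the Chebyshev polynomial `T_n` with integer coefficients, and shifting by `b π` only changes the
sign, rationality of `cos (π k / p)` passes to `cos (π / p)`.
-/

theorem cos_int_mul_eq_eval_chebyshevT (θ : ℝ) (q : ℚ) (h : cos θ = q) (n : ℤ) :
    cos (n * θ) = ((Chebyshev.T ℚ n).eval q : ℚ) := by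
  rw [← Chebyshev.T_real_cos, h, ← Chebyshev.map_T (Rat.castHom ℝ), eval_map,
    ← Rat.coe_castHom, eval₂_at_apply]

theorem exists_rat_cos_int_mul_add_int_mul_pi {θ : ℝ} (h : ∃ q : ℚ, cos θ = q) (a b : ℤ) :
    ∃ q : ℚ, cos (a * θ + b * π) = q := by
  obtain ⟨q, hq⟩ := h
  refine ⟨(-1) ^ b * (Chebyshev.T ℚ a).eval q, ?_⟩
  rw [cos_add_int_mul_pi, cos_int_mul_eq_eval_chebyshevT θ q hq]
  push_cast
  ring

theorem pi_div_eq_int_mul_add_int_mul_pi {p k : ℕ} (hp : p ≠ 0) {a b : ℤ}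
    (hab : a * k + b * p = 1) : π / p = a * (π * k / p) + b * π := by
  have hab' : (a : ℝ) * k + b * p = 1 := by exact_mod_cast hab
  field_simp
  linear_combination -hab'

theorem stmt_7 (p k : ℕ) (hp : 1 ≤ p) (hkp : Nat.Coprime k p)
    (h : ∃ m : ℚ, Real.cos (π * k / p) = (m : ℝ)) :
    ∃ m : ℚ, Real.cos (π / p) = (m : ℝ) := by
  obtain ⟨a, b, hab⟩ := Nat.isCoprime_iff_coprime.mpr hkp
  rw [pi_div_eq_int_mul_add_int_mul_pi (by omega) hab]
  exact exists_rat_cos_int_mul_add_int_mul_pi h a b
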